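/- (D^rrs is trivial on Bridged ts-LQParity) For every N ≥ 2, in the QBF Bridged ts-LQParity(N), D^rrs and D^trv coincide: for every existential variable y with z ∈ D_y (namely y ∈ {t_2,…,t_N, s_2,…,s_N, b}), the pair (z,y) belongs to D^rrs(Bridged ts-LQParity(N)). -/

import Mathlib

/-! ## Literals, clauses, DQBFs -/

structure Lit (V : Type) where
  var : V
  pos : Bool
deriving DecidableEq

def Lit.negate {V : Type} (l : Lit V) : Lit V := ⟨l.var, !l.pos⟩

abbrev Clause (V : Type) [DecidableEq V] : Type := Finset (Lit V)

/-- An S-form DQBF: universal variables `U`, existential variables `E`,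
dependency sets `dep` (only meaningful on `E`), and a CNF matrix. -/
structure DQBF (V : Type) [DecidableEq V] where
  U : Finset V
  E : Finset V
  dep : V → Finset V
  matrix : Finset (Clause V)

variable {V : Type} [DecidableEq V]

/-- Well-formedness of a DQBF. -/
def DQBF.WF (ψ : DQBF V) : Prop :=
  Disjoint ψ.U ψ.E ∧ (∀ x ∈ ψ.E, ψ.dep x ⊆ ψ.U) ∧
    ∀ C ∈ ψ.matrix, ∀ l ∈ C, l.var ∈ ψ.U ∪ ψ.E

/-- Dependency set with the convention `D_u = {u}` for universal variables. -/
def DQBF.depOf (ψ : DQBF V) (y : V) : Finset V := if y ∈ ψ.U then {y} else ψ.dep y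

/-! ## Semantics -/

def Clause.Sat (β : V → Bool) (C : Clause V) : Prop := ∃ l ∈ C, β l.var = l.pos

/-- A Skolem function set respects the dependency sets if the value of each
existential variable only depends on the assignment to its dependency set. -/
def DQBF.Respects (ψ : DQBF V) (f : V → (V → Bool) → Bool) : Prop :=
  ∀ x ∈ ψ.E, ∀ β γ : V → Bool, (∀ u ∈ ψ.dep x, β u = γ u) → f x β = f x γ

/-- The completed assignment `β ∪ f(β)`. -/
def DQBF.Completed (ψ : DQBF V) (f : V → (V → Bool) → Bool) (β : V → Bool) : V → Bool :=
  fun v => if v ∈ ψ.E then f v β else β v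

def DQBF.IsModel (ψ : DQBF V) (f : V → (V → Bool) → Bool) : Prop :=
  ψ.Respects f ∧ ∀ β : V → Bool, ∀ C ∈ ψ.matrix, Clause.Sat (ψ.Completed f β) C

def DQBF.IsTrue (ψ : DQBF V) : Prop := ∃ f, ψ.IsModel f

/-- Flip the value of variable `u` in an assignment. -/
def flipAt (u : V) (α : V → Bool) : V → Bool := fun w => if w = u then !(α w) else α w

/-- `(α, x, u)` is a dependency witness for the Skolem function set `f`. -/
def DepWitness (ψ : DQBF V) (f : V → (V → Bool) → Bool) (α : V → Bool) (x u : V) : Prop :=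
  f x α ≠ f x (flipAt u α)

/-! ## Resolution paths and dependency schemes -/

/-- The clauses of the matrix containing the literal `w`. -/
def DQBF.litClauses (ψ : DQBF V) (w : Lit V) : Finset (Clause V) :=
  ψ.matrix.filter fun C => w ∈ C

/-- `S_u`: the existential variables depending on `u`. -/
def DQBF.Sset (ψ : DQBF V) (u : V) : Finset V := ψ.E.filter fun x => u ∈ ψ.dep x

/-- `pathl^pu(w, ψ, χ, S)`: the least set of literals on `S`-variables reachable by a
`w`-pure resolution path starting from the clauses of `χ`. -/
inductive PathLPU (ψ : DQBF V) (w : Lit V) (χ : Finset (Clause V)) (S : Finset V) :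
    Lit V → Prop
  | base {C : Clause V} {l : Lit V} : C ∈ χ → l ∈ C → l.var ∈ S → PathLPU ψ w χ S l
  | step {p l : Lit V} {Ecl : Clause V} :
      PathLPU ψ w χ S p → Ecl ∈ ψ.matrix → p.negate ∈ Ecl → w.negate ∉ Ecl →
      l ∈ Ecl → l ≠ p.negate → l.var ∈ S → PathLPU ψ w χ S l

/-- `pathc^pu(w, ψ, χ, S)`: the corresponding set of reachable clauses. -/
inductive PathCPU (ψ : DQBF V) (w : Lit V) (χ : Finset (Clause V)) (S : Finset V) :
    Clause V → Prop
  | base {C : Clause V} : C ∈ χ → PathCPU ψ w χ S C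
  | step {p : Lit V} {Ecl : Clause V} :
      PathLPU ψ w χ S p → Ecl ∈ ψ.matrix → p.negate ∈ Ecl → w.negate ∉ Ecl →
      PathCPU ψ w χ S Ecl

/-- `pathl^rrs(ψ, χ, S)`: the analogous closure without the purity requirement. -/
inductive PathLRRS (ψ : DQBF V) (χ : Finset (Clause V)) (S : Finset V) : Lit V → Prop
  | base {C : Clause V} {l : Lit V} : C ∈ χ → l ∈ C → l.var ∈ S → PathLRRS ψ χ S l
  | step {p l : Lit V} {Ecl : Clause V} :
      PathLRRS ψ χ S p → Ecl ∈ ψ.matrix → p.negate ∈ Ecl →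
      l ∈ Ecl → l ≠ p.negate → l.var ∈ S → PathLRRS ψ χ S l

/-- `w ⤳ l` (pure path connection). -/
def ConnPU (ψ : DQBF V) (w l : Lit V) : Prop :=
  PathLPU ψ w (ψ.litClauses w) (ψ.Sset w.var) l

/-- `w ⤳ʳ l` (reflexive resolution path connection). -/
def ConnRRS (ψ : DQBF V) (w l : Lit V) : Prop :=
  PathLRRS ψ (ψ.litClauses w) (ψ.Sset w.var) l

/-- The pure universal dependency scheme `D^pu`. -/
def Dpu (ψ : DQBF V) (u x : V) : Prop :=
  u ∈ ψ.dep x ∧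
    ((ConnPU ψ ⟨u, true⟩ ⟨x, true⟩ ∧ ConnPU ψ ⟨u, false⟩ ⟨x, false⟩) ∨
      (ConnPU ψ ⟨u, false⟩ ⟨x, true⟩ ∧ ConnPU ψ ⟨u, true⟩ ⟨x, false⟩))

/-- The reflexive resolution path dependency scheme `D^rrs`. -/
def Drrs (ψ : DQBF V) (u x : V) : Prop :=
  u ∈ ψ.dep x ∧
    ((ConnRRS ψ ⟨u, true⟩ ⟨x, true⟩ ∧ ConnRRS ψ ⟨u, false⟩ ⟨x, false⟩) ∨
      (ConnRRS ψ ⟨u, false⟩ ⟨x, true⟩ ∧ ConnRRS ψ ⟨u, true⟩ ⟨x, false⟩))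

/-- The trivial dependency scheme `D^trv`. -/
def Dtrv (ψ : DQBF V) (u x : V) : Prop := u ∈ ψ.dep x

/-! ## LDQ(D)-Res -/

/-- Derivability of a clause in LDQ(D)-Res from the matrix of `ψ`, for a
dependency relation `D`. -/
inductive LDQDeriv (ψ : DQBF V) (D : V → V → Prop) : Clause V → Prop
  | ax {C : Clause V} : C ∈ ψ.matrix → LDQDeriv ψ D C
  | red {C : Clause V} {w : Lit V} :
      LDQDeriv ψ D (insert w C) → w.var ∈ ψ.U → w ∉ C →
      (∀ l ∈ C, l.var ∈ ψ.E → ¬ D w.var l.var) → LDQDeriv ψ D C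
  | res {Ec Fc : Clause V} {x : V} :
      x ∈ ψ.E →
      LDQDeriv ψ D (insert ⟨x, false⟩ Ec) → LDQDeriv ψ D (insert ⟨x, true⟩ Fc) →
      (⟨x, false⟩ : Lit V) ∉ Ec → (⟨x, true⟩ : Lit V) ∉ Fc →
      (∀ v ∈ Ec, v.var ∈ ψ.U → v.negate ∈ Fc → ¬ D v.var x) →
      LDQDeriv ψ D (Ec ∪ Fc)

/-- A single valid LDQ(D)-Res step, given the list of previously derived clauses. -/
def LDQStep (ψ : DQBF V) (D : V → V → Prop) (prev : List (Clause V)) (C : Clause V) : Prop :=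
  C ∈ ψ.matrix ∨
    (∃ w : Lit V, w.var ∈ ψ.U ∧ w ∉ C ∧ insert w C ∈ prev ∧
      ∀ l ∈ C, l.var ∈ ψ.E → ¬ D w.var l.var) ∨
    (∃ (x : V) (Ec Fc : Clause V), x ∈ ψ.E ∧ C = Ec ∪ Fc ∧
      (⟨x, false⟩ : Lit V) ∉ Ec ∧ (⟨x, true⟩ : Lit V) ∉ Fc ∧
      insert (⟨x, false⟩ : Lit V) Ec ∈ prev ∧ insert (⟨x, true⟩ : Lit V) Fc ∈ prev ∧
      ∀ v ∈ Ec, v.var ∈ ψ.U → v.negate ∈ Fc → ¬ D v.var x)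

/-- An LDQ(D)-Res proof: a list of clauses, each a valid step from the earlier ones. -/
def IsLDQProof (ψ : DQBF V) (D : V → V → Prop) (π : List (Clause V)) : Prop :=
  ∀ i : Fin π.length, LDQStep ψ D (π.take i.val) (π.get i)

def IsLDQRefutation (ψ : DQBF V) (D : V → V → Prop) (π : List (Clause V)) : Prop :=
  IsLDQProof ψ D π ∧ (∅ : Clause V) ∈ π

/-- A single valid Q-Res step. -/
def QResStep (ψ : DQBF V) (prev : List (Clause V)) (C : Clause V) : Prop :=
  C ∈ ψ.matrix ∨
    (∃ w : Lit V, w.var ∈ ψ.U ∧ w ∉ C ∧ w.negate ∉ C ∧ insert w C ∈ prev ∧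
      ∀ l ∈ C, l.var ∈ ψ.E → w.var ∉ ψ.dep l.var) ∨
    (∃ (x : V) (Ec Fc : Clause V), x ∈ ψ.E ∧ C = Ec ∪ Fc ∧
      (⟨x, false⟩ : Lit V) ∉ Ec ∧ (⟨x, true⟩ : Lit V) ∉ Fc ∧
      insert (⟨x, false⟩ : Lit V) Ec ∈ prev ∧ insert (⟨x, true⟩ : Lit V) Fc ∈ prev ∧
      ∀ v ∈ Ec, v.var ∈ ψ.U → v.negate ∉ Fc)

def IsQResProof (ψ : DQBF V) (π : List (Clause V)) : Prop :=
  ∀ i : Fin π.length, QResStep ψ (π.take i.val) (π.get i)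

def IsQResRefutation (ψ : DQBF V) (π : List (Clause V)) : Prop :=
  IsQResProof ψ π ∧ (∅ : Clause V) ∈ π

/-! ## QBFs: DQBFs with a linear quantifier prefix -/

structure QBF (V : Type) [DecidableEq V] extends DQBF V where
  ord : V → ℕ

/-- Well-formedness of a QBF: dependency sets are induced by the prefix order. -/
def QBF.WF (ψ : QBF V) : Prop :=
  ψ.toDQBF.WF ∧
    (∀ a ∈ ψ.U ∪ ψ.E, ∀ b ∈ ψ.U ∪ ψ.E, ψ.ord a = ψ.ord b → a = b) ∧
    ∀ x ∈ ψ.E, ∀ u, u ∈ ψ.dep x ↔ u ∈ ψ.U ∧ ψ.ord u < ψ.ord x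

/-! ## IndExt-QU-Res -/

/-- The clause `¬α` of negations of the literals of a partial assignment `α`. -/
def negAssign (α : Finset (Lit V)) : Clause V := α.image Lit.negate

/-- Size of a DQBF. -/
def DQBF.size (ψ : DQBF V) : ℕ := ψ.U.card + ψ.E.card + ∑ C ∈ ψ.matrix, (C.card + 1)

/-- IndExt-QU-Res derivations: from the DQBF `ψ0`, reach a (possibly extended)
prefix together with a set of derived clauses, in the given number of steps. -/
inductive IndExtDeriv (ψ0 : DQBF V) : DQBF V → Finset (Clause V) → ℕ → Prop
  | start : IndExtDeriv ψ0 ψ0 ψ0.matrix 0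
  | res {ψ : DQBF V} {Γ : Finset (Clause V)} {n : ℕ} {Ec Fc : Clause V} {x : V} :
      IndExtDeriv ψ0 ψ Γ n → x ∈ ψ.E →
      (⟨x, false⟩ : Lit V) ∉ Ec → (⟨x, true⟩ : Lit V) ∉ Fc →
      insert (⟨x, false⟩ : Lit V) Ec ∈ Γ → insert (⟨x, true⟩ : Lit V) Fc ∈ Γ →
      IndExtDeriv ψ0 ψ (insert (Ec ∪ Fc) Γ) (n + 1)
  | red {ψ : DQBF V} {Γ : Finset (Clause V)} {n : ℕ} {C : Clause V} {w : Lit V} :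
      IndExtDeriv ψ0 ψ Γ n → insert w C ∈ Γ → w.var ∈ ψ.U → w ∉ C → w.negate ∉ C →
      (∀ l ∈ C, l.var ∈ ψ.E → w.var ∉ ψ.dep l.var) →
      IndExtDeriv ψ0 ψ (insert C Γ) (n + 1)
  | ext {ψ : DQBF V} {Γ : Finset (Clause V)} {n : ℕ} (α : Finset (Lit V)) (y1 y2 v : V) :
      IndExtDeriv ψ0 ψ Γ n →
      (∀ a ∈ α, a.var ∈ ψ.U) → v ∉ ψ.U ∪ ψ.E → y1 ∈ ψ.U ∪ ψ.E → y2 ∈ ψ.U ∪ ψ.E →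
      IndExtDeriv ψ0
        ⟨ψ.U, insert v ψ.E,
          Function.update ψ.dep v ((ψ.depOf y1 ∪ ψ.depOf y2) \ α.image Lit.var), ψ.matrix⟩
        (insert (negAssign α ∪ ({⟨v, true⟩, ⟨y1, true⟩} : Clause V))
          (insert (negAssign α ∪ ({⟨v, true⟩, ⟨y2, true⟩} : Clause V))
            (insert (negAssign α ∪ ({⟨v, false⟩, ⟨y1, false⟩, ⟨y2, false⟩} : Clause V)) Γ)))
        (n + 1)
  | weakU {ψ : DQBF V} {Γ : Finset (Clause V)} {n : ℕ} (v : V) :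
      IndExtDeriv ψ0 ψ Γ n → v ∉ ψ.U ∪ ψ.E →
      IndExtDeriv ψ0 ⟨insert v ψ.U, ψ.E, ψ.dep, ψ.matrix⟩ Γ (n + 1)
  | weakE {ψ : DQBF V} {Γ : Finset (Clause V)} {n : ℕ} (v : V) (Dv : Finset V) :
      IndExtDeriv ψ0 ψ Γ n → v ∉ ψ.U ∪ ψ.E → Dv ⊆ ψ.U →
      IndExtDeriv ψ0 ⟨ψ.U, insert v ψ.E, Function.update ψ.dep v Dv, ψ.matrix⟩ Γ (n + 1)

/-- Substituting variables in a clause. -/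
def Clause.subst (σ : V → V) (C : Clause V) : Clause V :=
  C.image fun l => (⟨σ l.var, l.pos⟩ : Lit V)

/-! ## Unit propagation, outer variables, and DQRAT(D^pu) -/

/-- Literals derivable by unit propagation from a (possibly infinite) clause set. -/
inductive UPLit (Φ : Set (Clause V)) : Lit V → Prop
  | unit {C : Clause V} {l : Lit V} : C ∈ Φ → l ∈ C →
      (∀ l' ∈ C, l' ≠ l → UPLit Φ l'.negate) → UPLit Φ l

/-- `Φ ⊢₁ ⊥`: unit propagation derives a conflict. -/
def UPBot (Φ : Set (Clause V)) : Prop := ∃ C ∈ Φ, ∀ l ∈ C, UPLit Φ l.negate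

/-- The unit clauses negating the literals of `C`. -/
def negUnits (C : Clause V) : Set (Clause V) := {D | ∃ l ∈ C, D = ({l.negate} : Clause V)}

def DQBF.Inner (ψ : DQBF V) (u : V) : Set V := {y | y ∈ ψ.E ∧ u ∈ ψ.dep y}

/-- The set of outer variables of a variable. -/
def DQBF.Outer (ψ : DQBF V) (x : V) : Set V :=
  if x ∈ ψ.U then
    {x} ∪ ((↑(ψ.U ∪ ψ.E) : Set V) ∩ ⋂ z ∈ ψ.Inner x, {y | ψ.depOf y ⊆ ψ.dep z \ {x}})
  else {y | y ∈ ψ.U ∪ ψ.E ∧ ψ.depOf y ⊆ ψ.dep x}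

/-- `y ≲_Π x`. -/
def outerLe (ψ : DQBF V) (y x : V) : Prop := y ∈ ψ.Outer x

/-- `D_C`, the union of the dependency sets of the variables of a clause. -/
def depClause (ψ : DQBF V) (C : Clause V) : Finset V := C.biUnion fun l => ψ.depOf l.var

/-- The unit clauses used in the DQRAT side condition: outer literals of `D` negated. -/
def ratUnits (ψ : DQBF V) (D : Clause V) (l : Lit V) : Set (Clause V) :=
  {Dc | ∃ x ∈ D, x ≠ l.negate ∧ outerLe ψ x.var l.var ∧ Dc = ({x.negate} : Clause V)}

/-- DQRAT(D^pu) derivations: sequences of DQBFs, each obtained from the previous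
one by one of the rules ATA, Del, UR, DQRAT∃, DQRAT∀, BPM, D^pu. -/
inductive DQRATDeriv (ψ0 : DQBF V) : DQBF V → ℕ → Prop
  | start : DQRATDeriv ψ0 ψ0 0
  | ata {ψ : DQBF V} {n : ℕ} (C : Clause V) :
      DQRATDeriv ψ0 ψ n → UPBot ((↑ψ.matrix : Set (Clause V)) ∪ negUnits C) →
      DQRATDeriv ψ0 ⟨ψ.U, ψ.E, ψ.dep, insert C ψ.matrix⟩ (n + 1)
  | del {ψ : DQBF V} {n : ℕ} (C : Clause V) :
      DQRATDeriv ψ0 ψ n → C ∈ ψ.matrix →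
      DQRATDeriv ψ0 ⟨ψ.U, ψ.E, ψ.dep, ψ.matrix.erase C⟩ (n + 1)
  | ur {ψ : DQBF V} {n : ℕ} (C : Clause V) (l : Lit V) :
      DQRATDeriv ψ0 ψ n → insert l C ∈ ψ.matrix → l ∉ C → l.var ∈ ψ.U →
      l.var ∉ depClause ψ C →
      DQRATDeriv ψ0 ⟨ψ.U, ψ.E, ψ.dep, insert C (ψ.matrix.erase (insert l C))⟩ (n + 1)
  | ratE {ψ : DQBF V} {n : ℕ} (C : Clause V) (l : Lit V) :
      DQRATDeriv ψ0 ψ n → l.var ∈ ψ.E → l ∉ C →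
      (∀ D ∈ ψ.matrix, l.negate ∈ D →
        UPBot ((↑ψ.matrix : Set (Clause V)) ∪ negUnits (insert l C) ∪ ratUnits ψ D l)) →
      DQRATDeriv ψ0 ⟨ψ.U, ψ.E, ψ.dep, insert (insert l C) ψ.matrix⟩ (n + 1)
  | ratA {ψ : DQBF V} {n : ℕ} (C : Clause V) (l : Lit V) :
      DQRATDeriv ψ0 ψ n → l.var ∈ ψ.U → l ∉ C → insert l C ∈ ψ.matrix →
      (∀ D ∈ ψ.matrix, l.negate ∈ D →
        UPBot ((↑ψ.matrix : Set (Clause V)) ∪ negUnits C ∪ {({l} : Clause V)} ∪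
          ratUnits ψ D l)) →
      DQRATDeriv ψ0 ⟨ψ.U, ψ.E, ψ.dep, insert C (ψ.matrix.erase (insert l C))⟩ (n + 1)
  | bpm {ψ : DQBF V} {n : ℕ} (ψ' : DQBF V) :
      DQRATDeriv ψ0 ψ n → ψ.U ⊆ ψ'.U → ψ.E ⊆ ψ'.E → Disjoint ψ'.U ψ'.E →
      (∀ x ∈ ψ.E, ψ'.dep x = ψ.dep x) → (∀ x ∈ ψ'.E, ψ'.dep x ⊆ ψ'.U) →
      ψ'.matrix = ψ.matrix →
      DQRATDeriv ψ0 ψ' (n + 1)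
  | dpuStep {ψ : DQBF V} {n : ℕ} (ψ' : DQBF V) :
      DQRATDeriv ψ0 ψ n → ψ'.U = ψ.U → ψ'.E = ψ.E → ψ'.matrix = ψ.matrix →
      (∀ u x, x ∈ ψ.E → u ∉ ψ'.dep x → (u ∉ ψ.dep x ∨ ¬ Dpu ψ u x)) →
      DQRATDeriv ψ0 ψ' (n + 1)

/-- A DQRAT(D^pu) refutation of `ψ0` with `n` steps. -/
def DQRATRefutable (ψ0 : DQBF V) (n : ℕ) : Prop :=
  ∃ ψ : DQBF V, DQRATDeriv ψ0 ψ n ∧ (∅ : Clause V) ∈ ψ.matrix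

/-! ## The ts-LQParity formulas -/

inductive PVar : Type where
  | x : ℕ → PVar
  | z : PVar
  | t : ℕ → PVar
  | s : ℕ → PVar
  | b : PVar
deriving DecidableEq

def L (v : PVar) (b : Bool) : Lit PVar := ⟨v, b⟩

/-- The four clauses of `xor_l(o1, o2, o, zl)`. -/
def xorl (o1 o2 o : PVar) (zl : Lit PVar) : Finset (Clause PVar) :=
  { {zl, L o1 false, L o2 false, L o false},
    {zl, L o1 true,  L o2 true,  L o false},
    {zl, L o1 false, L o2 true,  L o true},
    {zl, L o1 true,  L o2 false, L o true} }

def tsMatrix (N : ℕ) : Finset (Clause PVar) :=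
  xorl (.x 1) (.x 2) (.t 2) (L .z true) ∪
    (Finset.Icc 3 N).biUnion (fun i => xorl (.t (i - 1)) (.x i) (.t i) (L .z true)) ∪
    xorl (.x 1) (.x 2) (.s 2) (L .z false) ∪
    (Finset.Icc 3 N).biUnion (fun i => xorl (.s (i - 1)) (.x i) (.s i) (L .z false)) ∪
    {{L .z true, L (.t N) true}, {L .z false, L (.s N) false}}

def tsDep : PVar → Finset PVar
  | .t _ => {.z}
  | .s _ => {.z}
  | .b => {.z}
  | _ => ∅

/-- The QBF ts-LQParity(N), presented as a DQBF. -/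
def tsLQParity (N : ℕ) : DQBF PVar where
  U := {.z}
  E := (Finset.Icc 1 N).image PVar.x ∪ (Finset.Icc 2 N).image PVar.t ∪
    (Finset.Icc 2 N).image PVar.s
  dep := tsDep
  matrix := tsMatrix N

def bridgedMatrix (N : ℕ) : Finset (Clause PVar) :=
  tsMatrix N ∪
    { {L .z true, L (.t N) false, L .b true}, {L .z true, L (.t N) true, L .b false},
      {L .z false, L (.s N) false, L .b true}, {L .z false, L (.s N) true, L .b false} }

/-- The QBF Bridged ts-LQParity(N), presented as a DQBF. -/
def bridged (N : ℕ) : DQBF PVar where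
  U := {.z}
  E := (Finset.Icc 1 N).image PVar.x ∪ (Finset.Icc 2 N).image PVar.t ∪
    (Finset.Icc 2 N).image PVar.s ∪ {.b}
  dep := tsDep
  matrix := bridgedMatrix N

/-! ## The NP-hardness gadget -/

inductive GVar (W : Type) : Type where
  | v : W → GVar W
  | u : GVar W
  | x : GVar W
deriving DecidableEq

/-- The gadget DQBF `∀(V ∪ {u}) ∃x(V ∪ {u}). (⋁_{v ∈ V} v) ∨ u ∨ ¬x`. -/
def gadget {W : Type} [DecidableEq W] (Vs : Finset W) : DQBF (GVar W) where
  U := Vs.image GVar.v ∪ {GVar.u}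
  E := {GVar.x}
  dep := fun y => if y = GVar.x then Vs.image GVar.v ∪ {GVar.u} else ∅
  matrix := {Vs.image (fun w => (⟨GVar.v w, true⟩ : Lit (GVar W))) ∪
    ({⟨GVar.u, true⟩, ⟨GVar.x, false⟩} : Clause (GVar W))}

/-- The Skolem function `f_x = φ(V) ∧ u`. -/
def gadgetSkolem {W : Type} [DecidableEq W] (φ : Finset (Clause W)) :
    GVar W → (GVar W → Bool) → Bool := fun y β =>
  if y = GVar.x then
    (decide (∀ C ∈ φ, ∃ l ∈ C, β (GVar.v l.var) = l.pos)) && β GVar.u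
  else false

/-! The literal `z` shares a clause with every literal of the `t`-chain, since each `xor_l`
gadget has clauses with both polarities of its output. The literal `¬z` shares a clause with both
`b`-literals (in the `s`-side bridge); the `t`-side bridge encodes `z ∨ (t_N ↔ b)`, so every
`b`-literal resolves to the `t_N`-literal of the same polarity; and for either polarity of its
output, an `xor_l` gadget has clauses with both polarities of its input, so the path runs down the
`t`-chain to every `t_j`. The `s`-chain is symmetric, with the roles of `z` and `¬z` exchanged. -/

/-- The clauses of `zl ∨ (o ↔ o')`. -/
def iffl (o o' : PVar) (zl : Lit PVar) : Finset (Clause PVar) :=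
  { {zl, L o false, L o' true}, {zl, L o true, L o' false} }

lemma mem_xorl (o1 o2 o : PVar) (zl : Lit PVar) (d e : Bool) :
    {zl, L o1 d, L o2 (xor d e), L o e} ∈ xorl o1 o2 o zl := by
  cases d <;> cases e <;> simp [xorl]

lemma mem_iffl (o o' : PVar) (zl : Lit PVar) (d : Bool) :
    {zl, L o d, L o' (!d)} ∈ iffl o o' zl := by
  cases d <;> simp [iffl]

section Paths

variable {ψ : DQBF PVar} {χ : Finset (Clause PVar)} {S : Finset PVar}

lemma connRRS_of_mem_matrix {w l : Lit PVar} {C : Clause PVar} (hC : C ∈ ψ.matrix)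
    (hw : w ∈ C) (hl : l ∈ C) (hS : l.var ∈ ψ.Sset w.var) : ConnRRS ψ w l :=
  PathLRRS.base (Finset.mem_filter.mpr ⟨hC, hw⟩) hl hS

lemma connRRS_xorl_output {o1 o2 o : PVar} {w : Lit PVar} (h : xorl o1 o2 o w ⊆ ψ.matrix)
    (hS : o ∈ ψ.Sset w.var) (e : Bool) : ConnRRS ψ w ⟨o, e⟩ :=
  connRRS_of_mem_matrix (h (mem_xorl o1 o2 o w true e)) (by simp) (by simp [L]) hS

lemma connRRS_iffl_right {o o' : PVar} {w : Lit PVar} (h : iffl o o' w ⊆ ψ.matrix)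
    (hS : o' ∈ ψ.Sset w.var) (e : Bool) : ConnRRS ψ w ⟨o', e⟩ := by
  have hC := h (mem_iffl o o' w (!e))
  rw [Bool.not_not] at hC
  exact connRRS_of_mem_matrix hC (by simp) (by simp [L]) hS

lemma PathLRRS.xorl_input {o1 o2 o : PVar} {zl : Lit PVar} (h : xorl o1 o2 o zl ⊆ ψ.matrix)
    (hne : o1 ≠ o) (hS : o1 ∈ S) {e : Bool} (hp : PathLRRS ψ χ S ⟨o, e⟩) (d : Bool) :
    PathLRRS ψ χ S ⟨o1, d⟩ :=
  hp.step (h (mem_xorl o1 o2 o zl d (!e))) (by simp [Lit.negate, L]) (by simp [L])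
    (by simp [Lit.negate, hne]) hS

lemma PathLRRS.iffl_left {o o' : PVar} {zl : Lit PVar} (h : iffl o o' zl ⊆ ψ.matrix)
    (hne : o ≠ o') (hS : o ∈ S) {e : Bool} (hp : PathLRRS ψ χ S ⟨o', e⟩) :
    PathLRRS ψ χ S ⟨o, e⟩ :=
  hp.step (h (mem_iffl o o' zl e)) (by simp [Lit.negate, L]) (by simp [L])
    (by simp [Lit.negate, hne]) hS

lemma PathLRRS.xorl_chain {f : ℕ → PVar} (hf : Function.Injective f) {zl : Lit PVar} {m n : ℕ}
    (hsub : ∀ i, m ≤ i → i < n → xorl (f i) (.x (i + 1)) (f (i + 1)) zl ⊆ ψ.matrix)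
    (hS : ∀ i, m ≤ i → i ≤ n → f i ∈ S) (hp : ∀ e, PathLRRS ψ χ S ⟨f n, e⟩)
    {j : ℕ} (hmj : m ≤ j) (hjn : j ≤ n) (d : Bool) : PathLRRS ψ χ S ⟨f j, d⟩ := by
  refine Nat.decreasingInduction' (P := fun k => ∀ d, PathLRRS ψ χ S ⟨f k, d⟩)
    (fun k hkn hmk ih => ?_) hjn hp d
  exact (ih true).xorl_input (hsub k (hmj.trans hmk) hkn) (hf.ne (Nat.succ_ne_self k).symm)
    (hS k (hmj.trans hmk) hkn.le)

end Paths

/-- The `t`-chain is guarded by the literal `z`, the `s`-chain by `¬z`. -/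
def chainVar : Bool → ℕ → PVar
  | true => .t
  | false => .s

lemma chainVar_injective (c : Bool) : Function.Injective (chainVar c) := by
  cases c <;> intro i j h <;> simpa [chainVar] using h

section Bridged

variable {N : ℕ}

lemma chainVar_mem_Sset (c : Bool) {i : ℕ} (h2 : 2 ≤ i) (hi : i ≤ N) :
    chainVar c i ∈ (bridged N).Sset .z := by
  cases c <;> simp [chainVar, DQBF.Sset, bridged, tsDep, h2, hi]

lemma b_mem_Sset : PVar.b ∈ (bridged N).Sset .z := by
  simp [DQBF.Sset, bridged, tsDep]

lemma eq_b_or_chainVar_of_mem_Sset {y : PVar} (hy : y ∈ (bridged N).Sset .z) :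
    y = .b ∨ ∃ c j, 2 ≤ j ∧ j ≤ N ∧ y = chainVar c j := by
  cases y with
  | t j => exact Or.inr ⟨true, j, by simpa [DQBF.Sset, bridged, tsDep, chainVar] using hy⟩
  | s j => exact Or.inr ⟨false, j, by simpa [DQBF.Sset, bridged, tsDep, chainVar] using hy⟩
  | b => exact Or.inl rfl
  | _ => simp [DQBF.Sset, bridged, tsDep] at hy

lemma xorl_chain_start_subset (c : Bool) :
    xorl (.x 1) (.x 2) (chainVar c 2) (L .z c) ⊆ (bridged N).matrix := by
  intro C hC
  cases c <;> simp only [chainVar] at hC <;>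
    simp only [bridged, bridgedMatrix, tsMatrix, Finset.mem_union] <;> tauto

lemma xorl_chain_subset (c : Bool) {i : ℕ} (h2 : 2 ≤ i) (hi : i < N) :
    xorl (chainVar c i) (.x (i + 1)) (chainVar c (i + 1)) (L .z c) ⊆ (bridged N).matrix := by
  intro C hC
  have hI : i + 1 ∈ Finset.Icc 3 N := Finset.mem_Icc.mpr ⟨by omega, hi⟩
  simp only [bridged, bridgedMatrix, tsMatrix, Finset.mem_union, Finset.mem_biUnion]
  cases c
  · exact Or.inl <| Or.inl <| Or.inr ⟨i + 1, hI, by simpa [chainVar] using hC⟩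
  · exact Or.inl <| Or.inl <| Or.inl <| Or.inl <|
      Or.inr ⟨i + 1, hI, by simpa [chainVar] using hC⟩

lemma iffl_chain_subset (c : Bool) :
    iffl (chainVar c N) .b (L .z c) ⊆ (bridged N).matrix := by
  intro C hC
  simp only [iffl, Finset.mem_insert, Finset.mem_singleton] at hC
  cases c <;> rcases hC with rfl | rfl <;> simp [bridged, bridgedMatrix, chainVar]

lemma connRRS_chainVar_same (c d : Bool) {j : ℕ} (h2 : 2 ≤ j) (hj : j ≤ N) :
    ConnRRS (bridged N) ⟨.z, c⟩ ⟨chainVar c j, d⟩ := by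
  obtain rfl | ⟨i, hi, rfl⟩ : j = 2 ∨ ∃ i, 2 ≤ i ∧ j = i + 1 := by
    rcases h2.eq_or_lt with h | h
    · exact Or.inl h.symm
    · exact Or.inr ⟨j - 1, by omega, by omega⟩
  · exact connRRS_xorl_output (xorl_chain_start_subset c) (chainVar_mem_Sset c le_rfl hj) d
  · exact connRRS_xorl_output (xorl_chain_subset c hi hj) (chainVar_mem_Sset c h2 hj) d

lemma connRRS_b (c d : Bool) : ConnRRS (bridged N) ⟨.z, c⟩ ⟨.b, d⟩ :=
  connRRS_iffl_right (iffl_chain_subset c) b_mem_Sset d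

lemma connRRS_chainVar_other (c d : Bool) {j : ℕ} (h2 : 2 ≤ j) (hj : j ≤ N) :
    ConnRRS (bridged N) ⟨.z, !c⟩ ⟨chainVar c j, d⟩ := by
  have hend : ∀ e, ConnRRS (bridged N) ⟨.z, !c⟩ ⟨chainVar c N, e⟩ := fun e =>
    (connRRS_b (!c) e).iffl_left (iffl_chain_subset c) (by cases c <;> simp [chainVar])
      (chainVar_mem_Sset c (h2.trans hj) le_rfl)
  exact PathLRRS.xorl_chain (chainVar_injective c) (fun i hi hiN => xorl_chain_subset c hi hiN)
    (fun i hi hiN => chainVar_mem_Sset c hi hiN) hend h2 hj d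

lemma connRRS_z_of_mem_Sset {y : PVar} (hy : y ∈ (bridged N).Sset .z) (c d : Bool) :
    ConnRRS (bridged N) ⟨.z, c⟩ ⟨y, d⟩ := by
  rcases eq_b_or_chainVar_of_mem_Sset hy with rfl | ⟨c', j, h2, hj, rfl⟩
  · exact connRRS_b c d
  · obtain rfl | rfl : c = c' ∨ c = !c' := by cases c <;> cases c' <;> simp
    · exact connRRS_chainVar_same c d h2 hj
    · exact connRRS_chainVar_other c' d h2 hj

end Bridged

theorem bridged_drrs_trivial_general (N : ℕ) (y : PVar)
    (hy : y ∈ (bridged N).E) (hz : PVar.z ∈ (bridged N).dep y) :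
    Drrs (bridged N) PVar.z y := by
  have hS : y ∈ (bridged N).Sset .z := Finset.mem_filter.mpr ⟨hy, hz⟩
  exact ⟨hz, Or.inl
    ⟨connRRS_z_of_mem_Sset hS true true, connRRS_z_of_mem_Sset hS false false⟩⟩

/-- D^rrs is trivial on Bridged ts-LQParity. For every `N ≥ 2` and
every existential variable `y` of Bridged ts-LQParity(N) with `z ∈ D_y`, the pair
`(z,y)` belongs to `D^rrs`. -/
theorem bridged_drrs_trivial (N : ℕ) (hN : 2 ≤ N) (y : PVar)
    (hy : y ∈ (bridged N).E) (hz : PVar.z ∈ (bridged N).dep y) :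
    Drrs (bridged N) PVar.z y :=
  bridged_drrs_trivial_general N y hy hz
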